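/- arXiv:1307.8246 — 6 statements merged into one kernel-verified Lean document; each statement's English description precedes it below -/
import Mathlib

section
/- Let X be a Hausdorff topological vector space and U ⊆ X a closed convex body with 0 in its interior. Then the characteristic cone of U (the set of x such that a + [0,∞)·x ⊆ U for some a ∈ U) equals the zero set of the Minkowski functional of U. -/
open Set Pointwise Filter Topology

/-- The characteristic cone of a set `U`: the set of directions `x` such that
some half-line `a + [0,∞)·x` with `a ∈ U` is contained in `U`. -/
def charCone {X : Type*} [AddCommGroup X] [Module ℝ X] (U : Set X) : Set X :=
  {x | ∃ a ∈ U, ∀ t : ℝ, 0 ≤ t → a + t • x ∈ U}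

/-!
A half-line `a + [0,∞)·x` inside a closed convex set `U` can be moved to any base point `b ∈ U`:
`b + t • x` is the limit, as `s → 0⁺`, of the points `b + s • (a + (t / s) • x - b)` of the
segments from `b` to the half-line. Hence, when `0 ∈ U`, the characteristic cone is
`{x | ∀ t ≥ 0, t • x ∈ U}`. For a convex absorbent `U` this is also the zero set of the gauge:
`gauge U (t • x) = t * gauge U x`, and `{gauge U < 1} ⊆ U`.
-/

theorem gauge_eq_zero_iff_forall_smul_mem {X : Type*} [AddCommGroup X] [Module ℝ X] {U : Set X}
    (hconv : Convex ℝ U) (habs : Absorbent ℝ U) {x : X} :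
    gauge U x = 0 ↔ ∀ t : ℝ, 0 ≤ t → t • x ∈ U := by
  constructor
  · intro hx t ht
    refine setOfPred_gauge_lt_one_subset_self hconv habs.zero_mem habs ?_
    simp [gauge_smul_of_nonneg ht, hx]
  · intro h
    refine le_antisymm (le_of_forall_pos_le_add fun ε hε => ?_) (gauge_nonneg x)
    rw [zero_add]
    exact gauge_le_of_mem hε.le ((mem_smul_set_iff_inv_smul_mem₀ hε.ne' _ _).2 (h ε⁻¹ (by positivity)))

section CharCone

variable {X : Type*} [AddCommGroup X] [Module ℝ X] [TopologicalSpace X] [ContinuousAdd X]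
  [ContinuousSMul ℝ X] {U : Set X}

theorem IsClosed.add_smul_mem_of_forall_add_smul_mem (hcl : IsClosed U) (hconv : Convex ℝ U)
    {a b x : X} (ha : ∀ t : ℝ, 0 ≤ t → a + t • x ∈ U) (hb : b ∈ U) {t : ℝ} (ht : 0 ≤ t) :
    b + t • x ∈ U := by
  have hlim : Tendsto (fun s : ℝ => b + s • (a - b) + t • x) (𝓝[>] 0) (𝓝 (b + t • x)) := by
    refine (Continuous.tendsto' ?_ 0 _ (by simp)).mono_left nhdsWithin_le_nhds
    fun_prop
  refine hcl.mem_of_tendsto hlim ?_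
  filter_upwards [Ioc_mem_nhdsGT one_pos] with s ⟨hs0, hs1⟩
  have hseg := hconv.add_smul_mem hb (y := a + (t / s) • x - b)
    (by simpa using ha (t / s) (by positivity)) ⟨hs0.le, hs1⟩
  convert hseg using 1
  simp only [smul_sub, smul_add, smul_smul, mul_div_cancel₀ t hs0.ne']
  abel

theorem mem_charCone_iff (hcl : IsClosed U) (hconv : Convex ℝ U) {b : X} (hb : b ∈ U) {x : X} :
    x ∈ charCone U ↔ ∀ t : ℝ, 0 ≤ t → b + t • x ∈ U :=
  ⟨fun ⟨_, _, ha⟩ _ ht => hcl.add_smul_mem_of_forall_add_smul_mem hconv ha hb ht,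
    fun h => ⟨b, hb, h⟩⟩

end CharCone

theorem stmt0_general {X : Type*} [AddCommGroup X] [Module ℝ X] [TopologicalSpace X]
    [IsTopologicalAddGroup X] [ContinuousSMul ℝ X]
    (U : Set X) (hcl : IsClosed U) (hconv : Convex ℝ U) (h0 : (0 : X) ∈ interior U) :
    charCone U = {x | gauge U x = 0} := by
  have habs : Absorbent ℝ U := absorbent_nhds_zero (mem_interior_iff_mem_nhds.mp h0)
  ext x
  rw [mem_charCone_iff hcl hconv habs.zero_mem, mem_ofPred_eq,
    gauge_eq_zero_iff_forall_smul_mem hconv habs]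
  simp only [zero_add]

theorem stmt0 {X : Type*} [AddCommGroup X] [Module ℝ X] [TopologicalSpace X]
    [IsTopologicalAddGroup X] [ContinuousSMul ℝ X] [T2Space X]
    (U : Set X) (hcl : IsClosed U) (hconv : Convex ℝ U) (h0 : (0 : X) ∈ interior U) :
    charCone U = {x | gauge U x = 0} :=
  stmt0_general U hcl hconv h0
end

section
/- Let X be a Hausdorff topological vector space and U ⊆ X a closed convex body with 0 ∈ int U. Then the map (u, v) ↦ w_{U−u}(v) is continuous on (int U) × X, where w_{U−u} denotes the Minkowski functional of the translated set U − u. -/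
/-!
If `a ∈ q • C` with `0 ≤ q < 1` and `C` convex, then `(1 - q) • C ⊆ C - {a}`, so translating a
convex set by a point of small gauge changes the gauge by at most the factor `1 / (1 - q)`.
Applied in both directions between `U - {u₀}` and `U - {u}`, this squeezes `gauge (U - {u}) v`
between two expressions in `gauge (U - {u₀})` that tend to `gauge (U - {u₀}) v₀` as
`(u, v) → (u₀, v₀)`, by continuity of the gauge of a convex neighbourhood of `0`.
-/

open Set Pointwise Filter Topology

section Translate

variable {X : Type*} [AddCommGroup X] {C U : Set X} {a u u' : X}

lemma mem_sub_singleton_iff {x : X} : x ∈ C - {a} ↔ x + a ∈ C := by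
  simp [sub_eq_iff_eq_add]

lemma sub_singleton_sub_singleton (b : X) : C - {a} - {b} = C - {a + b} := by
  ext x
  simp only [mem_sub_singleton_iff, add_assoc, add_comm b a]

variable [Module ℝ X]

lemma Convex.smul_subset_sub_singleton (hC : Convex ℝ C) {q : ℝ} (hq₀ : 0 ≤ q) (hq₁ : q ≤ 1)
    (ha : a ∈ q • C) : (1 - q) • C ⊆ C - {a} := by
  rintro _ ⟨c, hc, rfl⟩
  obtain ⟨c', hc', rfl⟩ := ha
  exact mem_sub_singleton_iff.2 (hC hc hc' (by linarith) hq₀ (by ring))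

lemma Convex.gauge_sub_singleton_le_of_mem (hC : Convex ℝ C) (habs : Absorbent ℝ C) {q : ℝ}
    (hq₀ : 0 ≤ q) (hq₁ : q < 1) (ha : a ∈ q • C) (v : X) :
    gauge (C - {a}) v ≤ gauge C v / (1 - q) := by
  have h1q : 0 < 1 - q := sub_pos.2 hq₁
  rw [le_div_iff₀ h1q]
  refine le_of_forall_gt_imp_ge_of_dense fun r hr => ?_
  obtain ⟨r', hr'₀, hr'r, hv⟩ := exists_lt_of_gauge_lt habs hr
  have hv' : v ∈ (r' / (1 - q)) • (C - {a}) := by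
    rw [← div_mul_cancel₀ r' h1q.ne', mul_smul] at hv
    exact smul_set_mono (hC.smul_subset_sub_singleton hq₀ hq₁.le ha) hv
  calc gauge (C - {a}) v * (1 - q) ≤ r' / (1 - q) * (1 - q) := by
        gcongr
        exact gauge_le_of_mem (by positivity) hv'
    _ = r' := div_mul_cancel₀ r' h1q.ne'
    _ ≤ r := hr'r.le

lemma Convex.gauge_sub_singleton_le (hC : Convex ℝ C) (habs : Absorbent ℝ C)
    (ha : gauge C a < 1) (v : X) :
    gauge (C - {a}) v ≤ gauge C v / (1 - gauge C a) := by
  have hlim : Tendsto (fun q => gauge C v / (1 - q)) (𝓝[>] (gauge C a))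
      (𝓝 (gauge C v / (1 - gauge C a))) :=
    (tendsto_const_nhds.div (tendsto_const_nhds.sub tendsto_id)
      (sub_pos.2 ha).ne').mono_left nhdsWithin_le_nhds
  refine ge_of_tendsto hlim ?_
  filter_upwards [Ioo_mem_nhdsGT ha] with q ⟨hq, hq₁⟩
  obtain ⟨q', hq'₀, hq'q, haq'⟩ := exists_lt_of_gauge_lt habs hq
  exact (hC.gauge_sub_singleton_le_of_mem habs hq'₀.le (hq'q.trans hq₁) haq' v).trans
    (div_le_div_of_nonneg_left (gauge_nonneg v) (by linarith) (by linarith))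

lemma Convex.gauge_sub_singleton_le_div (hU : Convex ℝ U) (habs : Absorbent ℝ (U - {u}))
    (h : gauge (U - {u}) (u' - u) < 1) (v : X) :
    gauge (U - {u'}) v ≤ gauge (U - {u}) v / (1 - gauge (U - {u}) (u' - u)) := by
  have htrans : U - {u} - {u' - u} = U - {u'} := by
    rw [sub_singleton_sub_singleton, add_sub_cancel]
  exact htrans ▸ (hU.sub (convex_singleton u)).gauge_sub_singleton_le habs h v

lemma Convex.gauge_sub_singleton_ge_mul (hU : Convex ℝ U) {u₀ : X}
    (habs₀ : Absorbent ℝ (U - {u₀})) (habs : Absorbent ℝ (U - {u}))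
    (h₁ : gauge (U - {u₀}) (u - u₀) < 1)
    (h₂ : gauge (U - {u₀}) (u₀ - u) / (1 - gauge (U - {u₀}) (u - u₀)) < 1) (v : X) :
    gauge (U - {u₀}) v * (1 - gauge (U - {u₀}) (u₀ - u) / (1 - gauge (U - {u₀}) (u - u₀)))
      ≤ gauge (U - {u}) v := by
  have hback : gauge (U - {u}) (u₀ - u)
      ≤ gauge (U - {u₀}) (u₀ - u) / (1 - gauge (U - {u₀}) (u - u₀)) :=
    hU.gauge_sub_singleton_le_div habs₀ h₁ _
  have hψ : gauge (U - {u}) (u₀ - u) < 1 := hback.trans_lt h₂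
  have hle := hU.gauge_sub_singleton_le_div habs hψ v
  rw [le_div_iff₀ (sub_pos.2 hψ)] at hle
  exact le_trans (mul_le_mul_of_nonneg_left (by linarith) (gauge_nonneg v)) hle

end Translate

lemma sub_singleton_mem_nhds_zero {X : Type*} [AddCommGroup X] [TopologicalSpace X]
    [IsTopologicalAddGroup X] {U : Set X} {u : X} (hu : u ∈ interior U) : U - {u} ∈ 𝓝 0 := by
  have heq : U - {u} = (· + u) ⁻¹' U := by
    ext x
    exact mem_sub_singleton_iff
  rw [heq]
  exact (continuous_add_const u).continuousAt.preimage_mem_nhds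
    (by rwa [zero_add, ← mem_interior_iff_mem_nhds])

theorem stmt1_general {X : Type*} [AddCommGroup X] [Module ℝ X] [TopologicalSpace X]
    [IsTopologicalAddGroup X] [ContinuousSMul ℝ X]
    (U : Set X) (hconv : Convex ℝ U) :
    ContinuousOn (fun p : X × X => gauge (U - {p.1}) p.2) (interior U ×ˢ (univ : Set X)) := by
  rintro ⟨u₀, v₀⟩ ⟨hu₀, -⟩
  have habs : ∀ u ∈ interior U, Absorbent ℝ (U - {u}) := fun u hu =>
    absorbent_nhds_zero (sub_singleton_mem_nhds_zero hu)
  set g := gauge (U - {u₀})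
  have hg : Continuous g :=
    continuous_gauge (hconv.sub (convex_singleton u₀)) (sub_singleton_mem_nhds_zero hu₀)
  have hzero : ∀ f : X × X → X, Continuous f → f (u₀, v₀) = 0 →
      Tendsto (fun p => g (f p)) (𝓝 (u₀, v₀)) (𝓝 0) := fun f hf hf₀ =>
    (hg.comp hf).tendsto' _ _ (by rw [Function.comp_apply, hf₀]; exact gauge_zero)
  have hs : Tendsto (fun p : X × X => g (p.1 - u₀)) (𝓝 (u₀, v₀)) (𝓝 0) :=
    hzero _ (by fun_prop) (sub_self u₀)
  have hr : Tendsto (fun p : X × X => g (u₀ - p.1) / (1 - g (p.1 - u₀))) (𝓝 (u₀, v₀)) (𝓝 0) := by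
    have := (hzero (fun p => u₀ - p.1) (by fun_prop) (sub_self u₀)).div
      (tendsto_const_nhds.sub hs) (by norm_num : (1 : ℝ) - 0 ≠ 0)
    rwa [zero_div] at this
  have hv : Tendsto (fun p : X × X => g p.2) (𝓝 (u₀, v₀)) (𝓝 (g v₀)) :=
    (hg.comp continuous_snd).tendsto (u₀, v₀)
  have hs₁ := hs.eventually_lt_const one_pos
  have hr₁ := hr.eventually_lt_const one_pos
  refine tendsto_of_tendsto_of_tendsto_of_le_of_le' (g := fun p : X × X =>
      g p.2 * (1 - g (u₀ - p.1) / (1 - g (p.1 - u₀)))) (h := fun p : X × X =>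
      g p.2 / (1 - g (p.1 - u₀))) ?_ ?_ ?_ ?_
  · have := hv.mul ((tendsto_const_nhds (x := (1 : ℝ))).sub hr)
    rw [sub_zero, mul_one] at this
    exact this.mono_left nhdsWithin_le_nhds
  · have := hv.div (tendsto_const_nhds.sub hs) (by norm_num : (1 : ℝ) - 0 ≠ 0)
    rw [sub_zero, div_one] at this
    exact this.mono_left nhdsWithin_le_nhds
  · filter_upwards [self_mem_nhdsWithin, nhdsWithin_le_nhds hs₁, nhdsWithin_le_nhds hr₁]
      with p ⟨hp, _⟩ hps hpr
    exact hconv.gauge_sub_singleton_ge_mul (habs u₀ hu₀) (habs p.1 hp) hps hpr p.2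
  · filter_upwards [nhdsWithin_le_nhds hs₁] with p hps
    exact hconv.gauge_sub_singleton_le_div (habs u₀ hu₀) hps p.2

theorem stmt1 {X : Type*} [AddCommGroup X] [Module ℝ X] [TopologicalSpace X]
    [IsTopologicalAddGroup X] [ContinuousSMul ℝ X] [T2Space X]
    (U : Set X) (hcl : IsClosed U) (hconv : Convex ℝ U) (h0 : (0 : X) ∈ interior U) :
    ContinuousOn (fun p : X × X => gauge (U - {p.1}) p.2) (interior U ×ˢ (univ : Set X)) :=
  stmt1_general U hconv
end

section
/- Let X be a topological space, Ω ⊆ X × ℝ open, F : Ω → ℝ a function, and (x₀, t₀) ∈ Ω. Suppose F and ∂F/∂t are continuous on Ω, F(x₀, t₀) = 0, and ∂F/∂t(x₀, t₀) ≠ 0. Then there exist an open neighborhood G of x₀ in X, an open neighborhood H of t₀ in ℝ with G × H ⊆ Ω, and a continuous function f : G → H such that for all (x, t) ∈ G × H, F(x, t) = 0 if and only if t = f(x). -/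
open Set

/-!
Where `∂F/∂t > 0` (otherwise replace `F` by `-F`), every `F (x, ·)` with `x` near `x₀` is strictly
increasing on a small interval `[a, b]` around `t₀`, and `F (x, a) < 0 < F (x, b)` persists near `x₀`
by continuity. The intermediate value theorem gives a unique zero `f x ∈ (a, b)`, and `f` is
continuous because `c < f x < d` is equivalent to the open condition `F (x, c) < 0 < F (x, d)`.
-/

section ImplicitFunction

variable {X : Type*} [TopologicalSpace X] {F : X × ℝ → ℝ} {a b : ℝ}

theorem continuousOn_of_strictMonoOn_of_apply_eq_zero {G : Set X} {f : X → ℝ}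
    (hcont : ∀ t ∈ Icc a b, ContinuousOn (fun x => F (x, t)) G)
    (hmono : ∀ x ∈ G, StrictMonoOn (fun t => F (x, t)) (Icc a b))
    (hf : ∀ x ∈ G, f x ∈ Ioo a b ∧ F (x, f x) = 0) :
    ContinuousOn f G := by
  have sign_iff : ∀ x ∈ G, ∀ t ∈ Icc a b, (F (x, t) < 0 ↔ t < f x) ∧ (0 < F (x, t) ↔ f x < t) :=
    fun x hx t ht => by
      obtain ⟨hfx, hFfx⟩ := hf x hx
      rw [← hFfx]
      exact ⟨(hmono x hx).lt_iff_lt ht (Ioo_subset_Icc_self hfx),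
        (hmono x hx).lt_iff_lt (Ioo_subset_Icc_self hfx) ht⟩
  intro x₁ hx₁
  obtain ⟨⟨hafx₁, hfx₁b⟩, -⟩ := hf x₁ hx₁
  refine tendsto_order.2 ⟨fun c hc => ?_, fun d hd => ?_⟩
  · have hc' : max a c ∈ Icc a b := ⟨le_max_left _ _, max_le (by linarith) (by linarith)⟩
    have hneg := (sign_iff x₁ hx₁ _ hc').1.2 (max_lt hafx₁ hc)
    filter_upwards [((hcont _ hc') x₁ hx₁).eventually_lt_const hneg, self_mem_nhdsWithin]
      with x hFx hx
    exact (le_max_right a c).trans_lt ((sign_iff x hx _ hc').1.1 hFx)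
  · have hd' : min b d ∈ Icc a b := ⟨le_min (by linarith) (by linarith), min_le_left _ _⟩
    have hpos := (sign_iff x₁ hx₁ _ hd').2.2 (lt_min hfx₁b hd)
    filter_upwards [((hcont _ hd') x₁ hx₁).eventually_const_lt hpos, self_mem_nhdsWithin]
      with x hFx hx
    exact ((sign_iff x hx _ hd').2.1 hFx).trans_le (min_le_right b d)

theorem exists_continuousOn_zero_of_strictMonoOn {V : Set X} {x₀ : X} (hV : IsOpen V)
    (hab : a ≤ b) (hF : ContinuousOn F (V ×ˢ Icc a b))
    (hmono : ∀ x ∈ V, StrictMonoOn (fun t => F (x, t)) (Icc a b))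
    (hx₀ : x₀ ∈ V) (ha : F (x₀, a) < 0) (hb : 0 < F (x₀, b)) :
    ∃ (G : Set X) (f : X → ℝ), IsOpen G ∧ x₀ ∈ G ∧ G ⊆ V ∧ ContinuousOn f G ∧
      (∀ x ∈ G, f x ∈ Ioo a b) ∧ ∀ x ∈ G, ∀ t ∈ Icc a b, F (x, t) = 0 ↔ t = f x := by
  have hcont_x : ∀ t ∈ Icc a b, ContinuousOn (fun x => F (x, t)) V := fun t ht =>
    hF.comp (continuousOn_id.prodMk continuousOn_const) fun x hx => ⟨hx, ht⟩
  have hcont_t : ∀ x ∈ V, ContinuousOn (fun t => F (x, t)) (Icc a b) := fun x hx =>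
    hF.comp (continuousOn_const.prodMk continuousOn_id) fun t ht => ⟨hx, ht⟩
  set G := (V ∩ (fun x => F (x, a)) ⁻¹' Iio 0) ∩ (V ∩ (fun x => F (x, b)) ⁻¹' Ioi 0)
  have hG : IsOpen G :=
    ((hcont_x a (left_mem_Icc.2 hab)).isOpen_inter_preimage hV isOpen_Iio).inter
      ((hcont_x b (right_mem_Icc.2 hab)).isOpen_inter_preimage hV isOpen_Ioi)
  have hGV : G ⊆ V := fun x hx => hx.1.1
  have exists_zero : ∀ x ∈ G, ∃ t ∈ Ioo a b, F (x, t) = 0 := fun x hx =>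
    intermediate_value_Ioo hab (hcont_t x (hGV hx)) ⟨hx.1.2, hx.2.2⟩
  choose! f hf using exists_zero
  refine ⟨G, f, hG, ⟨⟨hx₀, ha⟩, hx₀, hb⟩, hGV,
    continuousOn_of_strictMonoOn_of_apply_eq_zero (fun t ht => (hcont_x t ht).mono hGV)
      (fun x hx => hmono x (hGV hx)) hf, fun x hx => (hf x hx).1, fun x hx t ht => ?_⟩
  refine ⟨fun hFt => (hmono x (hGV hx)).injOn ht (Ioo_subset_Icc_self (hf x hx).1) ?_, ?_⟩
  · rw [hFt, (hf x hx).2]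
  · rintro rfl
    exact (hf x hx).2

theorem exists_isOpen_prod_Icc_subset {U : Set (X × ℝ)} {x₀ : X} {t₀ : ℝ} (hU : IsOpen U)
    (hmem : (x₀, t₀) ∈ U) :
    ∃ (V : Set X) (δ : ℝ), IsOpen V ∧ x₀ ∈ V ∧ 0 < δ ∧ V ×ˢ Icc (t₀ - δ) (t₀ + δ) ⊆ U := by
  obtain ⟨V, W, hV, hW, hx₀V, ht₀W, hVW⟩ := isOpen_prod_iff.1 hU x₀ t₀ hmem
  obtain ⟨δ, hδ, hδW⟩ := Metric.nhds_basis_closedBall.mem_iff.1 (hW.mem_nhds ht₀W)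
  rw [Real.closedBall_eq_Icc] at hδW
  exact ⟨V, δ, hV, hx₀V, hδ, (prod_mono subset_rfl hδW).trans hVW⟩

theorem exists_implicit_function_of_deriv_pos {Ω : Set (X × ℝ)} {x₀ : X} {t₀ : ℝ}
    (hΩ : IsOpen Ω) (hmem : (x₀, t₀) ∈ Ω) (hFcont : ContinuousOn F Ω)
    (hF'cont : ContinuousOn (fun p : X × ℝ => deriv (fun t => F (p.1, t)) p.2) Ω)
    (hzero : F (x₀, t₀) = 0) (hF'pos : 0 < deriv (fun t => F (x₀, t)) t₀) :
    ∃ (G : Set X) (H : Set ℝ) (f : X → ℝ),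
      IsOpen G ∧ x₀ ∈ G ∧ IsOpen H ∧ t₀ ∈ H ∧ G ×ˢ H ⊆ Ω ∧
      ContinuousOn f G ∧ (∀ x ∈ G, f x ∈ H) ∧
      ∀ x ∈ G, ∀ t ∈ H, (F (x, t) = 0 ↔ t = f x) := by
  obtain ⟨V, δ, hV, hx₀V, hδ, hsub⟩ := exists_isOpen_prod_Icc_subset
    (hF'cont.isOpen_inter_preimage hΩ isOpen_Ioi) (show (x₀, t₀) ∈ _ from ⟨hmem, hF'pos⟩)
  have ht₀ : t₀ ∈ Ioo (t₀ - δ) (t₀ + δ) := ⟨by linarith, by linarith⟩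
  have hmono : ∀ x ∈ V, StrictMonoOn (fun t => F (x, t)) (Icc (t₀ - δ) (t₀ + δ)) :=
    fun x hx => strictMonoOn_of_deriv_pos (convex_Icc _ _)
      (hFcont.comp (continuousOn_const.prodMk continuousOn_id) fun t ht => (hsub ⟨hx, ht⟩).1)
      fun t ht => (hsub (mk_mem_prod hx (interior_subset ht))).2
  obtain ⟨G, f, hG, hx₀G, hGV, hf, hfH, hzero_iff⟩ := exists_continuousOn_zero_of_strictMonoOn hV
    (by linarith) (hFcont.mono fun p hp => (hsub hp).1) hmono hx₀V
    (hzero ▸ hmono x₀ hx₀V (left_mem_Icc.2 (by linarith)) (Ioo_subset_Icc_self ht₀) ht₀.1)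
    (hzero ▸ hmono x₀ hx₀V (Ioo_subset_Icc_self ht₀) (right_mem_Icc.2 (by linarith)) ht₀.2)
  exact ⟨G, Ioo (t₀ - δ) (t₀ + δ), f, hG, hx₀G, isOpen_Ioo, ht₀,
    fun p hp => (hsub ⟨hGV hp.1, Ioo_subset_Icc_self hp.2⟩).1, hf, hfH,
    fun x hx t ht => hzero_iff x hx t (Ioo_subset_Icc_self ht)⟩

end ImplicitFunction

theorem stmt13_general {X : Type*} [TopologicalSpace X]
    (Ω : Set (X × ℝ)) (hΩ : IsOpen Ω) (F : X × ℝ → ℝ) (x₀ : X) (t₀ : ℝ)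
    (hmem : (x₀, t₀) ∈ Ω)
    (hFcont : ContinuousOn F Ω)
    (hF'cont : ContinuousOn (fun p : X × ℝ => deriv (fun t => F (p.1, t)) p.2) Ω)
    (hzero : F (x₀, t₀) = 0)
    (hF'ne : deriv (fun t => F (x₀, t)) t₀ ≠ 0) :
    ∃ (G : Set X) (H : Set ℝ) (f : X → ℝ),
      IsOpen G ∧ x₀ ∈ G ∧ IsOpen H ∧ t₀ ∈ H ∧ G ×ˢ H ⊆ Ω ∧
      ContinuousOn f G ∧ (∀ x ∈ G, f x ∈ H) ∧
      ∀ x ∈ G, ∀ t ∈ H, (F (x, t) = 0 ↔ t = f x) := by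
  rcases hF'ne.lt_or_gt with hneg | hpos
  · have deriv_neg : ∀ p : X × ℝ,
        deriv (fun t => -F (p.1, t)) p.2 = -deriv (fun t => F (p.1, t)) p.2 := fun _ => deriv.neg
    obtain ⟨G, H, f, hG, hx₀G, hH, ht₀H, hGH, hf, hfH, hzero_iff⟩ :=
      exists_implicit_function_of_deriv_pos (F := fun p => -F p) hΩ hmem hFcont.neg
        (by simp only [deriv_neg]; exact hF'cont.neg) (by rw [hzero, neg_zero])
        (by simpa only [deriv_neg (x₀, t₀), Left.neg_pos_iff] using hneg)
    exact ⟨G, H, f, hG, hx₀G, hH, ht₀H, hGH, hf, hfH,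
      fun x hx t ht => neg_eq_zero.symm.trans (hzero_iff x hx t ht)⟩
  · exact exists_implicit_function_of_deriv_pos hΩ hmem hFcont hF'cont hzero hpos

theorem stmt13 {X : Type*} [TopologicalSpace X]
    (Ω : Set (X × ℝ)) (hΩ : IsOpen Ω) (F : X × ℝ → ℝ) (x₀ : X) (t₀ : ℝ)
    (hmem : (x₀, t₀) ∈ Ω)
    (hFcont : ContinuousOn F Ω)
    (hdiff : ∀ p ∈ Ω, DifferentiableAt ℝ (fun t => F (p.1, t)) p.2)
    (hF'cont : ContinuousOn (fun p : X × ℝ => deriv (fun t => F (p.1, t)) p.2) Ω)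
    (hzero : F (x₀, t₀) = 0)
    (hF'ne : deriv (fun t => F (x₀, t)) t₀ ≠ 0) :
    ∃ (G : Set X) (H : Set ℝ) (f : X → ℝ),
      IsOpen G ∧ x₀ ∈ G ∧ IsOpen H ∧ t₀ ∈ H ∧ G ×ˢ H ⊆ Ω ∧
      ContinuousOn f G ∧ (∀ x ∈ G, f x ∈ H) ∧
      ∀ x ∈ G, ∀ t ∈ H, (F (x, t) = 0 ↔ t = f x) :=
  stmt13_general Ω hΩ F x₀ t₀ hmem hFcont hF'cont hzero hF'ne
end

section
/- Let γ : ℝ → ℝ be C¹ with 0 ≤ γ'(t) < (γ(t)+1)/t for t > 0 and γ = 0 near 0. For fixed w ≥ 0 and p ∈ ℝ, define F(α) = (1−α)·γ(w/α) − α − p on (0,∞). Then F'(α) = −γ(w/α) − ((1−α)/α²)·w·γ'(w/α) − 1 < 0 for all α > 0. -/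
/-! With `t = w / α` and `s = t γ'(t)`, the derivative equals `-(γ t + 1 - s) - s / α`.
The hypothesis on `γ'` gives `0 ≤ s < γ t + 1` for `t > 0`, and `γ = 0` near `0` gives it for `t = 0`,
so both terms are `≤ 0` and the first is `< 0`. -/

theorem hasDerivAt_one_sub_mul_comp_div {f : ℝ → ℝ} {f' w α : ℝ} (hα : α ≠ 0)
    (hf : HasDerivAt f f' (w / α)) :
    HasDerivAt (fun a : ℝ => (1 - a) * f (w / a)) (-f (w / α) - (1 - α) / α ^ 2 * w * f') α := by
  have hdiv : HasDerivAt (fun a : ℝ => w / a) (-(w / α ^ 2)) α := by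
    simpa [div_eq_mul_inv, neg_div, mul_div_assoc] using (hasDerivAt_inv hα).const_mul w
  have hsub : HasDerivAt (fun a : ℝ => 1 - a) (-1) α := by
    simpa using (hasDerivAt_id α).const_sub 1
  refine (hsub.fun_mul (hf.comp α hdiv)).congr_deriv ?_
  simp only [Function.comp_apply]
  ring

theorem neg_sub_div_sq_mul_sub_one_neg {g d w α : ℝ} (hα : 0 < α) (hs : 0 ≤ w / α * d)
    (hlt : w / α * d < g + 1) : -g - (1 - α) / α ^ 2 * w * d - 1 < 0 := by
  have hsplit : -g - (1 - α) / α ^ 2 * w * d - 1 = -(g + 1 - w / α * d) - w / α * d / α := by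
    field_simp
    ring
  have : 0 ≤ w / α * d / α := div_nonneg hs hα.le
  linarith

theorem mul_deriv_mem_Ico {γ : ℝ → ℝ}
    (hineq : ∀ t : ℝ, 0 < t → 0 ≤ deriv γ t ∧ deriv γ t < (γ t + 1) / t)
    (hzero : ∃ ε > (0 : ℝ), ∀ t : ℝ, |t| < ε → γ t = 0) {t : ℝ} (ht : 0 ≤ t) :
    t * deriv γ t ∈ Set.Ico 0 (γ t + 1) := by
  rcases ht.eq_or_lt with rfl | ht
  · obtain ⟨ε, hε, hγ⟩ := hzero
    simp [hγ 0 (by simpa using hε)]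
  · obtain ⟨hd, hlt⟩ := hineq t ht
    exact ⟨mul_nonneg ht.le hd, by rwa [lt_div_iff₀' ht] at hlt⟩

theorem stmt15 (γ : ℝ → ℝ) (hγ : ContDiff ℝ 1 γ)
    (hineq : ∀ t : ℝ, 0 < t → 0 ≤ deriv γ t ∧ deriv γ t < (γ t + 1) / t)
    (hzero : ∃ ε > (0 : ℝ), ∀ t : ℝ, |t| < ε → γ t = 0)
    (w p : ℝ) (hw : 0 ≤ w) :
    ∀ α : ℝ, 0 < α →
      HasDerivAt (fun α : ℝ => (1 - α) * γ (w / α) - α - p)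
        (-γ (w / α) - (1 - α) / α ^ 2 * w * deriv γ (w / α) - 1) α ∧
      -γ (w / α) - (1 - α) / α ^ 2 * w * deriv γ (w / α) - 1 < 0 := by
  intro α hα
  have hγ' : HasDerivAt γ (deriv γ (w / α)) (w / α) :=
    ((hγ.differentiable one_ne_zero) (w / α)).hasDerivAt
  obtain ⟨hs, hlt⟩ := mul_deriv_mem_Ico hineq hzero (div_nonneg hw hα.le)
  exact ⟨((hasDerivAt_one_sub_mul_comp_div hα.ne' hγ').sub (hasDerivAt_id α)).sub_const p,
    neg_sub_div_sq_mul_sub_one_neg hα hs hlt⟩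
end

section
/- Let X be a Hausdorff topological vector space, U ⊆ X a closed convex body with 0 ∈ int U, y ∈ cc(U) with −y ∈ ∂U, and φ a continuous linear functional with φ(y) = 1 and φ ≥ −1 on U. In ℝ³ with U = {(x₁,x₂,x₃) : x₁ ≥ max(x₂,0) − 1 and x₁ ≥ max(x₃,0) − 1}, y = (1,0,0), Z = {x : x₁ = −1}: the map H constructed from c(z) = (w_U(z+y) − 1)·y (as in Bessaga–Pełczyński's book) is not continuous; specifically, for xₙ = (−1,−1,1/n) → x = (−1,−1,0), one has H(xₙ) → (−1,−5/2,0) ≠ (−1,−1,0) = H(x). -/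
/-!
Along the segment `z = (-1, -1, s)`, `s ≥ 0`, one computes `c(z) = (s - 1, 0, 0)` and
`z - c(z) = (-s, -1, s)`. For `s > 0` the ray from `c(z)` through `z` leaves `U` at parameter
`1/2` (the gauge of `U - c(z)` at `z - c(z)` is `2`), so `H` stretches `z - c(z)` by `5/2` and
`H(z) = (-1 - 3s/2, -5/2, 5s/2)`, which tends to `(-1, -5/2, 0)`. For `s = 0` the whole ray
stays in `U`, the gauge vanishes, and `H(z) = z`.
-/

open Set Pointwise Filter Topology

noncomputable section

/-- The convex body of the counterexample:
`U = {x ∈ ℝ³ : x₁ ≥ max(x₂,0) − 1 and x₁ ≥ max(x₃,0) − 1}`. -/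
def U16 : Set (ℝ × ℝ × ℝ) := {x | max x.2.1 0 - 1 ≤ x.1 ∧ max x.2.2 0 - 1 ≤ x.1}

def y16 : ℝ × ℝ × ℝ := (1, 0, 0)

/-- `c(z) = (w_U(z+y) − 1)·y`, using the Minkowski functional (gauge) of `U`. -/
def c16 (z : ℝ × ℝ × ℝ) : ℝ × ℝ × ℝ := (gauge U16 (z + y16) - 1) • y16

/-- The parameter `t_u` of `u(z)` on the ray `c(z) + t(z − c(z))`:
`u(z) = c(z) + t_u (z − c(z))` where `t_u = 1 / w_{U−c(z)}(z − c(z))`. -/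
def tu16 (z : ℝ × ℝ × ℝ) : ℝ := 1 / gauge (U16 - {c16 z}) (z - c16 z)

/-- The value at `z ∈ Z` of the map `H` from Bessaga–Pełczyński's book: `h_z` is the
identity on `(c(z), v(z)]` with `v(z) = (u(z)+c(z))/2`, and on `v(z)+[0,∞)(z−c(z))` it is
the affine map fixing `v(z)` and sending `u(z)` to `z`; when the ray from `c(z)` through
`z` stays in `U` one has `u(z) = z` and `H(z) = z`. -/
def H16 (z : ℝ × ℝ × ℝ) : ℝ × ℝ × ℝ :=
  if gauge (U16 - {c16 z}) (z - c16 z) = 0 then z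
  else c16 z + (tu16 z / 2 + (1 - tu16 z / 2) ^ 2 / (tu16 z / 2)) • (z - c16 z)

section GaugeComputation

variable {E : Type*} [AddCommGroup E] [Module ℝ E] {s : Set E} {x : E}

theorem gauge_eq_of_forall_mem_smul_iff {a : ℝ} (ha : 0 ≤ a)
    (h : ∀ t, 0 < t → (x ∈ t • s ↔ a ≤ t)) : gauge s x = a := by
  refine le_antisymm (le_of_forall_pos_le_add fun ε hε => ?_) ?_
  · exact gauge_le_of_mem (by positivity) ((h _ (by positivity)).2 (by linarith))
  · rw [gauge_def]
    have ha₁ : 0 < a + 1 := by positivity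
    exact le_csInf ⟨a + 1, ha₁, (h _ ha₁).2 (by linarith)⟩
      fun t ⟨ht, hx⟩ => (h t ht).1 hx

theorem mem_smul_sub_singleton_iff {t : ℝ} (ht : t ≠ 0) {c : E} :
    x ∈ t • (s - {c}) ↔ x + t • c ∈ t • s := by
  rw [mem_smul_set_iff_inv_smul_mem₀ ht, mem_smul_set_iff_inv_smul_mem₀ ht, Set.sub_singleton,
    smul_add, inv_smul_smul₀ ht]
  simp [sub_eq_iff_eq_add]

end GaugeComputation

theorem mem_smul_U16_iff {t : ℝ} (ht : 0 < t) {x : ℝ × ℝ × ℝ} :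
    x ∈ t • U16 ↔ max x.2.1 0 - t ≤ x.1 ∧ max x.2.2 0 - t ≤ x.1 := by
  have key : ∀ b, max (t⁻¹ * b) 0 - 1 ≤ t⁻¹ * x.1 ↔ max b 0 - t ≤ x.1 := fun b => by
    rw [← mul_zero t⁻¹, ← mul_max_of_nonneg _ _ (inv_nonneg.2 ht.le), sub_le_iff_le_add,
      ← mul_le_mul_iff_of_pos_left ht, mul_add, ← mul_assoc, ← mul_assoc,
      mul_inv_cancel₀ ht.ne']
    simp only [one_mul, mul_one, mul_zero]
    constructor <;> intro <;> linarith
  rw [mem_smul_set_iff_inv_smul_mem₀ ht.ne']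
  exact and_congr (key _) (key _)

theorem gauge_U16_mk_zero_neg_one {s : ℝ} (hs : 0 ≤ s) : gauge U16 (0, -1, s) = s :=
  gauge_eq_of_forall_mem_smul_iff hs fun t ht => by
    rw [mem_smul_U16_iff ht, max_eq_right (by norm_num : (-1 : ℝ) ≤ 0), max_eq_left hs]
    constructor
    · exact fun h => by linarith [h.2]
    · exact fun h => ⟨by linarith, by linarith⟩

theorem c16_of_nonneg {s : ℝ} (hs : 0 ≤ s) : c16 (-1, -1, s) = (s - 1, 0, 0) := by
  have hz : ((-1, -1, s) : ℝ × ℝ × ℝ) + y16 = (0, -1, s) := by norm_num [y16]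
  rw [c16, hz, gauge_U16_mk_zero_neg_one hs]
  simp [y16]

theorem sub_c16_of_nonneg {s : ℝ} (hs : 0 ≤ s) :
    (-1, -1, s) - c16 (-1, -1, s) = (-s, -1, s) := by
  rw [c16_of_nonneg hs, Prod.mk_sub_mk, Prod.mk_sub_mk, sub_zero, sub_zero]
  congr 1
  ring

theorem mem_smul_U16_sub_singleton_iff {s t : ℝ} (hs : 0 ≤ s) (ht : 0 < t) :
    ((-s, -1, s) : ℝ × ℝ × ℝ) ∈ t • (U16 - {(s - 1, 0, 0)}) ↔ 2 * s ≤ t * s := by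
  rw [mem_smul_sub_singleton_iff ht.ne', mem_smul_U16_iff ht]
  simp only [Prod.smul_mk, Prod.mk_add_mk, smul_eq_mul, mul_zero, add_zero]
  rw [max_eq_right (by norm_num : (-1 : ℝ) ≤ 0), max_eq_left hs]
  constructor
  · exact fun h => by linarith [h.2]
  · exact fun h => ⟨by nlinarith, by linarith⟩

theorem H16_base : H16 (-1, -1, 0) = (-1, -1, 0) := by
  have hgauge : gauge (U16 - {c16 (-1, -1, 0)}) ((-1, -1, 0) - c16 (-1, -1, 0)) = 0 := by
    rw [sub_c16_of_nonneg le_rfl, c16_of_nonneg le_rfl]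
    exact gauge_eq_of_forall_mem_smul_iff le_rfl fun t ht =>
      iff_of_true ((mem_smul_U16_sub_singleton_iff le_rfl ht).2 (by simp)) ht.le
  rw [H16, if_pos hgauge]

theorem H16_of_pos {s : ℝ} (hs : 0 < s) :
    H16 (-1, -1, s) = (-1 - 3 * s / 2, -5 / 2, 5 * s / 2) := by
  have hgauge : gauge (U16 - {c16 (-1, -1, s)}) ((-1, -1, s) - c16 (-1, -1, s)) = 2 := by
    rw [sub_c16_of_nonneg hs.le, c16_of_nonneg hs.le]
    exact gauge_eq_of_forall_mem_smul_iff zero_le_two fun t ht => by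
      rw [mem_smul_U16_sub_singleton_iff hs.le ht, mul_le_mul_iff_of_pos_right hs]
  rw [H16, tu16, hgauge, if_neg two_ne_zero, sub_c16_of_nonneg hs.le, c16_of_nonneg hs.le]
  ext <;> norm_num <;> ring

theorem stmt16 :
    H16 (-1, -1, 0) = (-1, -1, 0) ∧
    Tendsto (fun n : ℕ => ((-1, -1, 1 / (n + 1)) : ℝ × ℝ × ℝ)) atTop (𝓝 (-1, -1, 0)) ∧
    Tendsto (fun n : ℕ => H16 (-1, -1, 1 / (n + 1))) atTop (𝓝 (-1, -5/2, 0)) ∧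
    ((-1, -5/2, 0) : ℝ × ℝ × ℝ) ≠ H16 (-1, -1, 0) ∧
    ¬ ContinuousAt H16 (-1, -1, 0) := by
  have hs : Tendsto (fun n : ℕ => (1 : ℝ) / (n + 1)) atTop (𝓝 0) :=
    tendsto_one_div_add_atTop_nhds_zero_nat
  have hz : Tendsto (fun n : ℕ => ((-1, -1, 1 / (n + 1)) : ℝ × ℝ × ℝ)) atTop
      (𝓝 (-1, -1, 0)) :=
    ((by fun_prop : Continuous fun s : ℝ => ((-1, -1, s) : ℝ × ℝ × ℝ)).tendsto 0).comp hs
  have hHz : Tendsto (fun n : ℕ => H16 (-1, -1, 1 / (n + 1))) atTop (𝓝 (-1, -5/2, 0)) := by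
    simp_rw [H16_of_pos Nat.one_div_pos_of_nat]
    have hcont :
        Continuous fun s : ℝ => ((-1 - 3 * s / 2, -5 / 2, 5 * s / 2) : ℝ × ℝ × ℝ) := by
      fun_prop
    convert (hcont.tendsto 0).comp hs using 2 <;> norm_num
  have hne : ((-1, -5/2, 0) : ℝ × ℝ × ℝ) ≠ H16 (-1, -1, 0) := by
    rw [H16_base]
    norm_num
  exact ⟨H16_base, hz, hHz, hne, fun hH => hne (tendsto_nhds_unique hHz (hH.tendsto.comp hz))⟩

end
end

section
/- Let X be a Hausdorff topological vector space, U ⊆ X a closed convex body whose characteristic cone cc(U) is not a linear subspace. Then the pair (X, U) is homeomorphic to the pair (X, X⁺), where X⁺ = φ⁻¹([−1, ∞)) is a closed half-space determined by a continuous linear functional φ; i.e., there is a homeomorphism H : X → X with H(U) = X⁺. -/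
/-!
Translate `U` so that `0 ∈ int U`. Since `cc(U)` is not a subspace, it contains a direction `y`
with `-y ∉ U` (after rescaling `y`), and separating `-y` from `int U` yields `ψ` with `ψ y = 1`
and `ψ ≥ -1` on `U`. The stretch `x ↦ exp (ψ x) • (x - ψ x • y) + ψ x • y` is a homeomorphism
dilating the level `ψ = s` by `exp s` about `s • y`. As `0 ∈ int U` and `U + ℝ≥0 y ⊆ U`, every
line parallel to `y` therefore meets the stretched body; convexity and `ψ ≥ -1` make these
intersections up-rays `[G, ∞)`, and closedness together with `0 ∈ int U` makes the entry height
`G` continuous. The shear `x ↦ x + (-1 - G x) • y` finally carries `{G ≤ ψ}` onto `{ψ ≥ -1}`.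
-/

open Set Filter Topology

section CharCone

variable {X : Type*} [AddCommGroup X] [Module ℝ X] {U : Set X}

theorem add_smul_mem_of_mem_charCone [TopologicalSpace X] [ContinuousAdd X]
    [ContinuousSMul ℝ X] (hcl : IsClosed U) (hconv : Convex ℝ U) {x b : X}
    (hx : x ∈ charCone U) (hb : b ∈ U) {t : ℝ} (ht : 0 ≤ t) : b + t • x ∈ U := by
  obtain ⟨a, ha, hray⟩ := hx
  have hev : ∀ᶠ ε in 𝓝[>] (0 : ℝ), (1 - ε) • b + ε • a + t • x ∈ U := by
    filter_upwards [Ioo_mem_nhdsGT one_pos] with ε ⟨hε0, hε1⟩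
    convert hconv hb (hray (t / ε) (by positivity)) (by linarith : (0 : ℝ) ≤ 1 - ε) hε0.le
      (by ring) using 1
    rw [smul_add, smul_smul, mul_div_cancel₀ _ hε0.ne', add_assoc]
  have hlim : Tendsto (fun ε : ℝ ↦ (1 - ε) • b + ε • a + t • x) (𝓝[>] 0) (𝓝 (b + t • x)) := by
    have hcont : Continuous fun ε : ℝ ↦ (1 - ε) • b + ε • a + t • x := by fun_prop
    simpa using (hcont.tendsto 0).mono_left nhdsWithin_le_nhds
  exact hcl.mem_of_tendsto hlim hev

theorem exists_submodule_eq_charCone [TopologicalSpace X] [ContinuousAdd X]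
    [ContinuousSMul ℝ X] (hcl : IsClosed U) (hconv : Convex ℝ U) (hU : U.Nonempty)
    (hneg : ∀ x ∈ charCone U, -x ∈ charCone U) :
    ∃ S : Submodule ℝ X, (S : Set X) = charCone U := by
  obtain ⟨a, ha⟩ := hU
  have hsmul : ∀ c : ℝ, 0 ≤ c → ∀ x ∈ charCone U, c • x ∈ charCone U := fun c hc x hx ↦
    ⟨a, ha, fun t ht ↦ by
      simpa [smul_smul] using add_smul_mem_of_mem_charCone hcl hconv hx ha (mul_nonneg ht hc)⟩
  refine ⟨{ carrier := charCone U
            add_mem' := fun {x₁ x₂} h₁ h₂ ↦ ⟨a, ha, fun t ht ↦ ?_⟩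
            zero_mem' := ⟨a, ha, fun t _ ↦ by simpa using ha⟩
            smul_mem' := fun c x hx ↦ ?_ }, rfl⟩
  · simpa [smul_add, add_assoc] using add_smul_mem_of_mem_charCone hcl hconv h₂
      (add_smul_mem_of_mem_charCone hcl hconv h₁ ha ht) ht
  · rcases le_or_gt 0 c with hc | hc
    · exact hsmul c hc x hx
    · simpa using hsmul (-c) (by linarith) (-x) (hneg x hx)

end CharCone

theorem Real.exp_neg_sub_mul_le {s s' : ℝ} (hs : -1 ≤ s) (hss : s ≤ s') :
    Real.exp (-(s' - s)) * s ≤ s' := by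
  have hl : Real.exp (-(s' - s)) ≤ 1 := Real.exp_le_one_iff.2 (by linarith)
  rcases le_or_gt 0 s with h | h
  · nlinarith
  · nlinarith [Real.add_one_le_exp (-(s' - s))]

noncomputable section

namespace BessagaKlee

variable {X : Type*} [AddCommGroup X] [Module ℝ X] [TopologicalSpace X]

def stretch (ψ : X →L[ℝ] ℝ) (y : X) (c : ℝ) (x : X) : X :=
  Real.exp (c * ψ x) • (x - ψ x • y) + ψ x • y

/-- With `p = w - ψ w • y` the projection of `w` to `ker ψ`, this is `stretch ψ y (-1) (p + s • y)`:
the preimage of `V` is the fibre over `p`, along `y`, of the stretched set `stretch ψ y 1 '' V`. -/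
def fiberCurve (ψ : X →L[ℝ] ℝ) (y w : X) (s : ℝ) : X :=
  Real.exp (-s) • (w - ψ w • y) + s • y

def entryTime (V : Set X) (ψ : X →L[ℝ] ℝ) (y w : X) : ℝ :=
  sInf (fiberCurve ψ y w ⁻¹' V)

variable {V : Set X} {ψ : X →L[ℝ] ℝ} {y : X}

theorem apply_stretch (hψy : ψ y = 1) (c : ℝ) (x : X) : ψ (stretch ψ y c x) = ψ x := by
  simp [stretch, hψy]

theorem stretch_neg_stretch (hψy : ψ y = 1) (c : ℝ) (x : X) :
    stretch ψ y (-c) (stretch ψ y c x) = x := by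
  rw [stretch, apply_stretch hψy]
  simp [stretch, smul_smul, ← Real.exp_add]

theorem stretch_neg_one (x : X) : stretch ψ y (-1) x = fiberCurve ψ y x (ψ x) := by
  simp [stretch, fiberCurve]

theorem apply_fiberCurve (hψy : ψ y = 1) (w : X) (s : ℝ) : ψ (fiberCurve ψ y w s) = s := by
  simp [fiberCurve, hψy]

theorem fiberCurve_add_smul (hψy : ψ y = 1) (w : X) (t : ℝ) :
    fiberCurve ψ y (w + t • y) = fiberCurve ψ y w := by
  ext s
  simp only [fiberCurve, map_add, map_smul, hψy, smul_eq_mul, mul_one]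
  module

theorem fiberCurve_eq_smul_add_smul (w : X) (s s' : ℝ) :
    fiberCurve ψ y w s' =
      Real.exp (-(s' - s)) • fiberCurve ψ y w s + (s' - Real.exp (-(s' - s)) * s) • y := by
  have : Real.exp (-s') = Real.exp (-(s' - s)) * Real.exp (-s) := by
    rw [← Real.exp_add]; ring_nf
  simp only [fiberCurve, this]
  module

theorem entryTime_add_smul (hψy : ψ y = 1) (w : X) (t : ℝ) :
    entryTime V ψ y (w + t • y) = entryTime V ψ y w := by
  rw [entryTime, fiberCurve_add_smul hψy, entryTime]

theorem add_smul_mem_interior [IsTopologicalAddGroup X]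
    (hrec : ∀ x ∈ V, ∀ t : ℝ, 0 ≤ t → x + t • y ∈ V) {x : X}
    (hx : x ∈ interior V) {t : ℝ} (ht : 0 ≤ t) : x + t • y ∈ interior V :=
  interior_maximal (by rintro _ ⟨z, hz, rfl⟩; exact hrec z (interior_subset hz) t ht)
    ((isOpenMap_add_right (t • y)) _ isOpen_interior) ⟨x, hx, rfl⟩

variable [ContinuousSMul ℝ X]

theorem exists_fiberCurve_mem (h0 : (0 : X) ∈ interior V)
    (hrec : ∀ x ∈ V, ∀ t : ℝ, 0 ≤ t → x + t • y ∈ V) (w : X) :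
    ∃ s, fiberCurve ψ y w s ∈ V := by
  have hlim : Tendsto (fun s : ℝ ↦ Real.exp (-s) • (w - ψ w • y)) atTop (𝓝 0) := by
    simpa using Real.tendsto_exp_neg_atTop_nhds_zero.smul_const (w - ψ w • y)
  obtain ⟨s, hsV, hs0⟩ :=
    ((hlim.eventually (mem_interior_iff_mem_nhds.1 h0)).and (eventually_ge_atTop 0)).exists
  exact ⟨s, hrec _ hsV s hs0⟩

variable [IsTopologicalAddGroup X]

theorem fiberCurve_mem_interior (hconv : Convex ℝ V) (h0 : (0 : X) ∈ interior V)
    (hrec : ∀ x ∈ V, ∀ t : ℝ, 0 ≤ t → x + t • y ∈ V) (hψy : ψ y = 1)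
    (hψV : ∀ x ∈ V, -1 ≤ ψ x) {w : X} {s s' : ℝ} (hs : fiberCurve ψ y w s ∈ V) (hss : s < s') :
    fiberCurve ψ y w s' ∈ interior V := by
  have hs1 : -1 ≤ s := apply_fiberCurve hψy w s ▸ hψV _ hs
  have hl : Real.exp (-(s' - s)) < 1 := Real.exp_lt_one_iff.2 (by linarith)
  have hshrink : Real.exp (-(s' - s)) • fiberCurve ψ y w s ∈ interior V := by
    simpa using hconv.combo_self_interior_mem_interior hs h0 (Real.exp_pos _).le
      (sub_pos.2 hl) (add_sub_cancel _ _)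
  -- shrink towards `0 ∈ int V`, then climb along `y`; `ψ ≥ -1` makes the climb nonnegative
  rw [fiberCurve_eq_smul_add_smul w s s']
  exact add_smul_mem_interior hrec hshrink (sub_nonneg.2 (Real.exp_neg_sub_mul_le hs1 hss.le))

theorem fiberCurve_mem_iff (hcl : IsClosed V) (hconv : Convex ℝ V) (h0 : (0 : X) ∈ interior V)
    (hrec : ∀ x ∈ V, ∀ t : ℝ, 0 ≤ t → x + t • y ∈ V) (hψy : ψ y = 1)
    (hψV : ∀ x ∈ V, -1 ≤ ψ x) (w : X) (s : ℝ) :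
    fiberCurve ψ y w s ∈ V ↔ entryTime V ψ y w ≤ s := by
  have hbdd : BddBelow (fiberCurve ψ y w ⁻¹' V) :=
    ⟨-1, fun s hs ↦ apply_fiberCurve hψy w s ▸ hψV _ hs⟩
  have hclosed : IsClosed (fiberCurve ψ y w ⁻¹' V) := hcl.preimage (by unfold fiberCurve; fun_prop)
  have hmem : entryTime V ψ y w ∈ fiberCurve ψ y w ⁻¹' V :=
    hclosed.csInf_mem (exists_fiberCurve_mem h0 hrec w) hbdd
  refine ⟨fun hs ↦ csInf_le hbdd hs, fun hs ↦ ?_⟩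
  rcases hs.eq_or_lt with rfl | hlt
  · exact hmem
  · exact interior_subset (fiberCurve_mem_interior hconv h0 hrec hψy hψV hmem hlt)

theorem continuous_entryTime (hcl : IsClosed V) (hconv : Convex ℝ V)
    (h0 : (0 : X) ∈ interior V) (hrec : ∀ x ∈ V, ∀ t : ℝ, 0 ≤ t → x + t • y ∈ V)
    (hψy : ψ y = 1) (hψV : ∀ x ∈ V, -1 ≤ ψ x) : Continuous (entryTime V ψ y) := by
  have hmem_iff := fiberCurve_mem_iff hcl hconv h0 hrec hψy hψV
  have hcont (s : ℝ) : Continuous fun w ↦ fiberCurve ψ y w s := by unfold fiberCurve; fun_prop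
  refine continuous_iff_continuousAt.2 fun w₀ ↦ tendsto_order.2 ⟨fun s hs ↦ ?_, fun s hs ↦ ?_⟩
  · have hout : fiberCurve ψ y w₀ s ∈ Vᶜ := fun h ↦ ((hmem_iff w₀ s).1 h).not_gt hs
    filter_upwards [(hcont s).continuousAt.preimage_mem_nhds (hcl.isOpen_compl.mem_nhds hout)]
      with w hw
    exact lt_of_not_ge fun h ↦ hw ((hmem_iff w s).2 h)
  · obtain ⟨s₁, hs₀, hs₁⟩ := exists_between hs
    have hin : fiberCurve ψ y w₀ s₁ ∈ interior V :=
      fiberCurve_mem_interior hconv h0 hrec hψy hψV ((hmem_iff w₀ _).2 le_rfl) hs₀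
    filter_upwards [(hcont s₁).continuousAt.preimage_mem_nhds (isOpen_interior.mem_nhds hin)]
      with w hw
    exact ((hmem_iff w s₁).1 (interior_subset hw)).trans_lt hs₁

def shearHomeomorph (y : X) (F : X → ℝ) (hF : Continuous F)
    (hFy : ∀ x (t : ℝ), F (x + t • y) = F x) : X ≃ₜ X where
  toFun x := x + F x • y
  invFun x := x - F x • y
  left_inv x := by simp [hFy]
  right_inv x := by
    simp only
    rw [sub_eq_add_neg, ← neg_smul, hFy, neg_smul, neg_add_cancel_right]
  continuous_toFun := by fun_prop
  continuous_invFun := by fun_prop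

theorem exists_homeomorph_image_setOf_le (hψy : ψ y = 1) {G : X → ℝ}
    (hG : Continuous G) (hGy : ∀ x (t : ℝ), G (x + t • y) = G x) (c : ℝ) :
    ∃ H : X ≃ₜ X, H '' {x | G x ≤ ψ x} = ψ ⁻¹' Ici c := by
  refine ⟨shearHomeomorph y (fun x ↦ c - G x) (by fun_prop) (fun x t ↦ by rw [hGy]), ?_⟩
  ext z
  rw [Homeomorph.image_eq_preimage_symm]
  simp [shearHomeomorph, sub_eq_add_neg, ← neg_smul, hGy, hψy]
  constructor <;> intro h <;> linarith

def stretchHomeomorph (hψy : ψ y = 1) (c : ℝ) : X ≃ₜ X where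
  toFun := stretch ψ y c
  invFun := stretch ψ y (-c)
  left_inv := stretch_neg_stretch hψy c
  right_inv x := by simpa using stretch_neg_stretch hψy (-c) x
  continuous_toFun := by unfold stretch; fun_prop
  continuous_invFun := by unfold stretch; fun_prop

theorem image_stretchHomeomorph (hcl : IsClosed V) (hconv : Convex ℝ V)
    (h0 : (0 : X) ∈ interior V) (hrec : ∀ x ∈ V, ∀ t : ℝ, 0 ≤ t → x + t • y ∈ V)
    (hψy : ψ y = 1) (hψV : ∀ x ∈ V, -1 ≤ ψ x) :
    stretchHomeomorph hψy 1 '' V = {x | entryTime V ψ y x ≤ ψ x} := by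
  ext x
  rw [Homeomorph.image_eq_preimage_symm, mem_preimage, mem_ofPred_eq,
    ← fiberCurve_mem_iff hcl hconv h0 hrec hψy hψV, ← stretch_neg_one]
  rfl

theorem exists_homeomorph_image_eq_preimage_Ici_of_neg_one_le (hcl : IsClosed V)
    (hconv : Convex ℝ V) (h0 : (0 : X) ∈ interior V) (hrec : ∀ x ∈ V, ∀ t : ℝ, 0 ≤ t → x + t • y ∈ V)
    (hψy : ψ y = 1) (hψV : ∀ x ∈ V, -1 ≤ ψ x) :
    ∃ H : X ≃ₜ X, H '' V = ψ ⁻¹' Ici (-1) := by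
  obtain ⟨H, hH⟩ := exists_homeomorph_image_setOf_le hψy
    (continuous_entryTime hcl hconv h0 hrec hψy hψV) (entryTime_add_smul hψy) (-1)
  refine ⟨(stretchHomeomorph hψy 1).trans H, ?_⟩
  rw [← hH, ← image_stretchHomeomorph hcl hconv h0 hrec hψy hψV, image_image]
  rfl

theorem exists_dual_apply_eq_one_and_neg_one_le (hconv : Convex ℝ V) (h0 : (0 : X) ∈ interior V)
    (hy : -y ∉ V) : ∃ ψ : X →L[ℝ] ℝ, ψ y = 1 ∧ ∀ x ∈ V, -1 ≤ ψ x := by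
  obtain ⟨f, hf⟩ := geometric_hahn_banach_open_point hconv.interior isOpen_interior
    (fun h ↦ hy (interior_subset h))
  have hfy : f y < 0 := by simpa using hf 0 h0
  have hle : ∀ x ∈ V, f x ≤ f (-y) := by
    intro x hx
    have hx' : x ∈ closure (interior V) := by
      rw [hconv.closure_interior_eq_closure_of_nonempty_interior ⟨0, h0⟩]
      exact subset_closure hx
    exact closure_minimal (fun z hz ↦ (hf z hz).le)
      (isClosed_le f.continuous continuous_const) hx'
  refine ⟨(f y)⁻¹ • f, inv_mul_cancel₀ hfy.ne, fun x hx ↦ ?_⟩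
  change -1 ≤ (f y)⁻¹ * f x
  rw [inv_mul_eq_div, le_div_iff_of_neg hfy]
  simpa using hle x hx

theorem exists_dual_homeomorph_image_eq_preimage_Ici (hcl : IsClosed V) (hconv : Convex ℝ V)
    (h0 : (0 : X) ∈ interior V) (hrec : ∀ x ∈ V, ∀ t : ℝ, 0 ≤ t → x + t • y ∈ V)
    (hy : -y ∉ V) : ∃ (ψ : X →L[ℝ] ℝ) (H : X ≃ₜ X), ψ y = 1 ∧ H '' V = ψ ⁻¹' Ici (-1) := by
  obtain ⟨ψ, hψy, hψV⟩ := exists_dual_apply_eq_one_and_neg_one_le hconv h0 hy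
  obtain ⟨H, hH⟩ := exists_homeomorph_image_eq_preimage_Ici_of_neg_one_le hcl hconv h0 hrec hψy hψV
  exact ⟨ψ, H, hψy, hH⟩

end BessagaKlee

end

theorem stmt19_general {X : Type*} [AddCommGroup X] [Module ℝ X] [TopologicalSpace X]
    [IsTopologicalAddGroup X] [ContinuousSMul ℝ X]
    (U : Set X) (hcl : IsClosed U) (hconv : Convex ℝ U)
    (hint : (interior U).Nonempty)
    (hns : ¬ ∃ S : Submodule ℝ X, (S : Set X) = charCone U) :
    ∃ (φ : X →L[ℝ] ℝ) (H : X ≃ₜ X), φ ≠ 0 ∧ H '' U = φ ⁻¹' (Ici (-1)) := by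
  obtain ⟨a, ha⟩ := hint
  have haU : a ∈ U := interior_subset ha
  obtain ⟨y, hy, hny⟩ : ∃ y ∈ charCone U, -y ∉ charCone U := by
    by_contra! h
    exact hns (exists_submodule_eq_charCone hcl hconv ⟨a, haU⟩ h)
  obtain ⟨t, ht, hat⟩ : ∃ t : ℝ, 0 < t ∧ a + -(t • y) ∉ U := by
    by_contra! h
    refine hny ⟨a, haU, fun s hs ↦ ?_⟩
    rcases hs.eq_or_lt with rfl | hs
    · simpa using haU
    · simpa using h s hs
  let T := Homeomorph.addLeft a
  obtain ⟨φ, H, hφ, hH⟩ := BessagaKlee.exists_dual_homeomorph_image_eq_preimage_Ici (V := T ⁻¹' U)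
    (y := t • y) (hcl.preimage T.continuous) (hconv.translate_preimage_right a)
    (by rw [← T.preimage_interior]; simpa [T] using ha)
    (fun x hx s hs ↦ by
      simpa [T, add_assoc, smul_smul] using
        add_smul_mem_of_mem_charCone hcl hconv hy hx (mul_nonneg hs ht.le))
    hat
  refine ⟨φ, T.symm.trans H, fun h ↦ by simp [h] at hφ, ?_⟩
  rw [← hH, ← T.image_symm, image_image]
  rfl

/-- Case (iii) of the Bessaga–Klee classification: if the characteristic cone of a
closed convex body `U` is not a linear subspace, then the pair `(X, U)` is homeomorphic
to `(X, X⁺)` with `X⁺ = φ⁻¹([−1, ∞))` a closed half-space. -/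
theorem stmt19 {X : Type*} [AddCommGroup X] [Module ℝ X] [TopologicalSpace X]
    [IsTopologicalAddGroup X] [ContinuousSMul ℝ X] [T2Space X]
    (U : Set X) (hcl : IsClosed U) (hconv : Convex ℝ U)
    (hint : (interior U).Nonempty)
    (hns : ¬ ∃ S : Submodule ℝ X, (S : Set X) = charCone U) :
    ∃ (φ : X →L[ℝ] ℝ) (H : X ≃ₜ X), φ ≠ 0 ∧ H '' U = φ ⁻¹' (Ici (-1)) :=
  stmt19_general U hcl hconv hint hns
end
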